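/- Fix a positive integer d and v ∈ I(d). For every monomial 𝔖 in ON(v) and every α ∈ 𝔖, the o-depth of α in 𝔖 is at least the depth of α in the monomial 𝔖 ∪ 𝔖^# of N(v). -/

import Mathlib

namespace OG

/-- `star d k = k* = 2d+1-k`. -/
def star (d k : ℕ) : ℕ := 2 * d + 1 - k

/-- `I(d,2d)`: the set of `d`-element subsets of `{1,…,2d}`. -/
def Idn (d : ℕ) : Set (Finset ℕ) :=
  {v | v.card = d ∧ ∀ k ∈ v, 1 ≤ k ∧ k ≤ 2 * d}

/-- The partial order on `I(d,2d)`: entrywise comparison of increasing enumerations. -/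
def leI (x y : Finset ℕ) : Prop :=
  List.Forall₂ (· ≤ ·) (x.sort (· ≤ ·)) (y.sort (· ≤ ·))

/-- `I(d)`: elements of `I(d,2d)` containing exactly one of `k`, `k*` for each `k`,
with evenly many entries exceeding `d`. -/
def Iset (d : ℕ) : Set (Finset ℕ) :=
  {v | v ∈ Idn d ∧ (∀ k, 1 ≤ k → k ≤ 2 * d → (k ∈ v ↔ star d k ∉ v)) ∧
       Even ((v.filter (fun k => d < k)).card)}

/-- membership in `N(v)`. -/
def inN (d : ℕ) (v : Finset ℕ) (p : ℕ × ℕ) : Prop :=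
  1 ≤ p.1 ∧ p.1 ≤ 2 * d ∧ 1 ≤ p.2 ∧ p.2 ≤ 2 * d ∧ p.1 ∉ v ∧ p.2 ∈ v ∧ p.2 < p.1

/-- membership in `OR(v)`. -/
def inOR (d : ℕ) (v : Finset ℕ) (p : ℕ × ℕ) : Prop :=
  1 ≤ p.1 ∧ p.1 ≤ 2 * d ∧ 1 ≤ p.2 ∧ p.2 ≤ 2 * d ∧ p.1 ∉ v ∧ p.2 ∈ v ∧ p.1 < star d p.2

/-- membership in `ON(v) = OR(v) ∩ N(v)`. -/
def inON (d : ℕ) (v : Finset ℕ) (p : ℕ × ℕ) : Prop := inN d v p ∧ inOR d v p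

/-- membership in the diagonal `D(v)`. -/
def inDiag (d : ℕ) (v : Finset ℕ) (p : ℕ × ℕ) : Prop :=
  p.1 ∉ v ∧ p.2 ∈ v ∧ p.1 = star d p.2

instance (d : ℕ) (v : Finset ℕ) : DecidablePred (inN d v) := fun p => by
  unfold inN; infer_instance

instance (d : ℕ) (v : Finset ℕ) : DecidablePred (inOR d v) := fun p => by
  unfold inOR; infer_instance

instance (d : ℕ) (v : Finset ℕ) : DecidablePred (inON d v) := fun p => by
  unfold inON; infer_instance

instance (d : ℕ) (v : Finset ℕ) : DecidablePred (inDiag d v) := fun p => by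
  unfold inDiag; infer_instance

/-- `(R,C) > (r,c)` iff `R > r` and `C < c`. -/
def pgt (A B : ℕ × ℕ) : Prop := B.1 < A.1 ∧ A.2 < B.2

instance : DecidableRel pgt := fun A B => by unfold pgt; infer_instance

/-- `(R,C)` dominates `(r,c)` iff `R ≥ r` and `C ≤ c`. -/
def pdom (A B : ℕ × ℕ) : Prop := B.1 ≤ A.1 ∧ A.2 ≤ B.2

/-- vertical projection `p_v(r,c) = (c*,c)`. -/
def pv (d : ℕ) (α : ℕ × ℕ) : ℕ × ℕ := (star d α.2, α.2)

/-- horizontal projection `p_h(r,c) = (r,r*)`. -/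
def ph (d : ℕ) (α : ℕ × ℕ) : ℕ × ℕ := (α.1, star d α.1)

/-- `(r,c)^# = (c*,r*)`. -/
def hash (d : ℕ) (α : ℕ × ℕ) : ℕ × ℕ := (star d α.2, star d α.1)

/-- A `v`-chain: a strictly decreasing (under `pgt`) list of elements of `ON(v)`. -/
def IsVChain (d : ℕ) (v : Finset ℕ) (C : List (ℕ × ℕ)) : Prop :=
  C.Chain' pgt ∧ ∀ α ∈ C, inON d v α

/-- Two consecutive elements `(r,c) > (R,C)` of a `v`-chain are connected
if `r* ≥ C` and `R > r*`. -/
def Connected (d : ℕ) (α β : ℕ × ℕ) : Prop :=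
  β.2 ≤ star d α.1 ∧ star d α.1 < β.1

instance (d : ℕ) : ∀ α β, Decidable (Connected d α β) := fun α β => by
  unfold Connected; infer_instance

/-- The connected components of a `v`-chain. -/
def components (d : ℕ) (C : List (ℕ × ℕ)) : List (List (ℕ × ℕ)) :=
  C.splitBy (fun a b => decide (Connected d a b))

/-- The three possible types of an element of a `v`-chain. -/
inductive VType | V | H | S
deriving DecidableEq

/-- The type of an element `α` of a `v`-chain `C`: type V if `α` is not the last element
of its connected component or that component has even cardinality; otherwise type H if
`p_h(α) ∈ N(v)` (i.e. `r > r*`) and type S if not. -/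
def typeOf (d : ℕ) (C : List (ℕ × ℕ)) (α : ℕ × ℕ) : VType :=
  match (components d C).find? (fun g => decide (α ∈ g)) with
  | some g =>
      if g.getLast? = some α ∧ Odd g.length then
        (if star d α.1 < α.1 then VType.H else VType.S)
      else VType.V
  | none => VType.V

/-- `𝔖_{C,α}`. -/
def SCa (d : ℕ) (C : List (ℕ × ℕ)) (α : ℕ × ℕ) : Multiset (ℕ × ℕ) :=
  match typeOf d C α with
  | VType.V => {pv d α}
  | VType.H => {pv d α, ph d α}
  | VType.S => {α, hash d α}

/-- `𝔖_C`: the multiset union of the `𝔖_{C,α}` over `α ∈ C`. -/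
def SC (d : ℕ) (C : List (ℕ × ℕ)) : Multiset (ℕ × ℕ) :=
  (C.map (fun α => SCa d C α)).sum

/-- `q_{C,α}`. -/
def qCa (d : ℕ) (C : List (ℕ × ℕ)) (α : ℕ × ℕ) : ℕ × ℕ :=
  match typeOf d C α with
  | VType.S => α
  | _ => pv d α

/-- A strictly decreasing chain of elements of the monomial `S`. -/
def IsChainIn (S : Multiset (ℕ × ℕ)) (L : List (ℕ × ℕ)) : Prop :=
  L.Chain' pgt ∧ ∀ β ∈ L, β ∈ S

/-- The depth of `α` in a monomial `S` of `N(v)`: the maximal length of a strictly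
decreasing chain of elements of `S` ending at `α`. -/
noncomputable def depth (S : Multiset (ℕ × ℕ)) (α : ℕ × ℕ) : ℕ :=
  sSup {k | ∃ L, IsChainIn S L ∧ L.getLast? = some α ∧ L.length = k}

/-- The o-depth of `α` in a `v`-chain `C`: the depth of `q_{C,α}` in `𝔖_C`. -/
noncomputable def odepthC (d : ℕ) (C : List (ℕ × ℕ)) (α : ℕ × ℕ) : ℕ :=
  depth (SC d C) (qCa d C α)

/-- The o-depth of `α` in a monomial `S` of `ON(v)`: the maximum of `odepthC` over
all `v`-chains in `S` containing `α`. -/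
noncomputable def odepthM (d : ℕ) (v : Finset ℕ) (S : Multiset (ℕ × ℕ)) (α : ℕ × ℕ) : ℕ :=
  sSup {k | ∃ C, IsVChain d v C ∧ (∀ β ∈ C, β ∈ S) ∧ α ∈ C ∧ odepthC d C α = k}

/-- A distinguished subset of `N(v)`. -/
def Distinguished (d : ℕ) (v : Finset ℕ) (S : Finset (ℕ × ℕ)) : Prop :=
  (∀ p ∈ S, inN d v p) ∧
  ∀ A ∈ S, ∀ B ∈ S, A ≠ B →
    A.1 ≠ B.1 ∧ A.2 ≠ B.2 ∧ (B.1 < A.1 → (B.1 < A.2 ∨ A.2 < B.2))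

/-- The element of `I(d,2d)` attached to a distinguished subset `S` of `N(v)`:
remove from `v` the column indices of elements of `S` and add their row indices. -/
def toW (v : Finset ℕ) (S : Finset (ℕ × ℕ)) : Finset ℕ :=
  (v \ S.image Prod.snd) ∪ S.image Prod.fst

/-- `w(C) = w_C`, the element of `I(d,2d)` attached to the `v`-chain `C` via the
distinguished subset `𝔖_C`. -/
def wC (d : ℕ) (v : Finset ℕ) (C : List (ℕ × ℕ)) : Finset ℕ :=
  toW v (SC d C).toFinset

/-- `w` ortho-dominates a monomial `S` in `ON(v)`: `w ≥ w(C)` for every `v`-chain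
`C` contained in `S`. -/
def ODominates (d : ℕ) (v w : Finset ℕ) (S : Multiset (ℕ × ℕ)) : Prop :=
  ∀ C : List (ℕ × ℕ), IsVChain d v C → (∀ β ∈ C, β ∈ S) → leI (wC d v C) w

/-- `x` dominates a monomial `S` in `N(v)` (in the sense of the Grassmannian case):
`x ≥ w_L` for every strictly decreasing chain `L` contained in `S`. -/
def Dominates (d : ℕ) (v x : Finset ℕ) (S : Multiset (ℕ × ℕ)) : Prop :=
  ∀ L : List (ℕ × ℕ), L.Chain' pgt → (∀ β ∈ L, β ∈ S) → leI (toW v L.toFinset) x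

/-- The `v`-degree of `θ`: half the cardinality of `v \ θ`. -/
def vdeg (v θ : Finset ℕ) : ℕ := (v \ θ).card / 2

/-- the element next to `α` in the list `C`. -/
def nextInC (C : List (ℕ × ℕ)) (α : ℕ × ℕ) : Option (ℕ × ℕ) :=
  C[C.idxOf α + 1]?

/-- The critical element of a `v`-chain: its first element whose horizontal projection
does not belong to `N(v)` (i.e. with `r ≤ r*`). -/
def critical (d : ℕ) (C : List (ℕ × ℕ)) : Option (ℕ × ℕ) :=
  C.find? (fun x => decide (x.1 ≤ star d x.1))

/-- `α` is the last element of its connected component in `C`. -/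
def isCompLast (d : ℕ) (C : List (ℕ × ℕ)) (α : ℕ × ℕ) : Prop :=
  ∃ g ∈ components d C, g.getLast? = some α

/-- The condition (*): `α` has type H in `C` and `p_h(α) ≯ β'` for some `β' ∈ 𝔖_{C,β}`. -/
def starCond (d : ℕ) (C : List (ℕ × ℕ)) (α β : ℕ × ℕ) : Prop :=
  typeOf d C α = VType.H ∧ ∃ β' ∈ SCa d C β, ¬ pgt (ph d α) β'

/-- A standard monomial in `I(d)`: a weakly decreasing sequence of elements of `I(d)`. -/
def IsStdMon (d : ℕ) (L : List (Finset ℕ)) : Prop :=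
  (∀ θ ∈ L, θ ∈ Iset d) ∧ L.Chain' (fun a b => leI b a)

/-- A standard monomial is `w`-dominated if `w ≥ θ₁`. -/
def WDominated (w : Finset ℕ) (L : List (Finset ℕ)) : Prop :=
  ∀ θ, L.head? = some θ → leI θ w

/-- A standard monomial is `v`-compatible if each member is comparable with `v`
and distinct from `v`. -/
def VCompatible (v : Finset ℕ) (L : List (Finset ℕ)) : Prop :=
  ∀ θ ∈ L, θ ≠ v ∧ (leI θ v ∨ leI v θ)

/-- The degree of a standard monomial: the sum of the `v`-degrees of its members. -/
def stdDeg (v : Finset ℕ) (L : List (Finset ℕ)) : ℕ :=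
  (L.map (fun θ => vdeg v θ)).sum

end OG

/-!
Folding `𝔖 ∪ 𝔖^#` back onto `𝔖` (undoing `#` on the elements with `r + c > 2d`) preserves `>`,
so a chain in `𝔖 ∪ 𝔖^#` ending at `α` becomes a `v`-chain `C` in `𝔖` of the same length ending
at `α`. Along `C` the elements `q_{C,β}` again decrease strictly, which gives a chain in `𝔖_C` of
that length ending at `q_{C,α}`. The only delicate case is an element of type S followed by one
of another type; it cannot occur, because after an element with `r ≤ r*` every later element
has `r ≤ r*` and forms a singleton component, hence has type S.
-/

namespace OG

section Depth

instance : Trans pgt pgt pgt := ⟨fun h₁ h₂ => ⟨h₂.1.trans h₁.1, h₁.2.trans h₂.2⟩⟩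

theorem nodup_of_isChain_pgt {L : List (ℕ × ℕ)} (h : L.IsChain pgt) : L.Nodup :=
  (List.isChain_iff_pairwise.mp h).imp fun hab heq => (heq ▸ hab).1.false

theorem IsChainIn.length_le_card {T : Multiset (ℕ × ℕ)} {L : List (ℕ × ℕ)}
    (h : IsChainIn T L) : L.length ≤ Multiset.card T :=
  calc L.length = L.toFinset.card := (List.toFinset_card_of_nodup (nodup_of_isChain_pgt h.1)).symm
    _ ≤ T.toFinset.card := Finset.card_le_card fun x hx => by
      simpa using h.2 x (List.mem_toFinset.mp hx)
    _ ≤ Multiset.card T := Multiset.toFinset_card_le T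

theorem depth_le_card (T : Multiset (ℕ × ℕ)) (q : ℕ × ℕ) : depth T q ≤ Multiset.card T :=
  csSup_le' (by rintro _ ⟨L, hL, -, rfl⟩; exact hL.length_le_card)

theorem IsChainIn.length_le_depth {T : Multiset (ℕ × ℕ)} {L : List (ℕ × ℕ)} {q : ℕ × ℕ}
    (h : IsChainIn T L) (hq : L.getLast? = some q) : L.length ≤ depth T q :=
  le_csSup ⟨Multiset.card T, by rintro _ ⟨L', hL', -, rfl⟩; exact hL'.length_le_card⟩
    ⟨L, h, hq, rfl⟩

end Depth

variable {d : ℕ} {v : Finset ℕ}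

theorem inON.bounds {p : ℕ × ℕ} (h : inON d v p) : p.2 < p.1 ∧ p.1 + p.2 ≤ 2 * d := by
  obtain ⟨⟨-, -, -, -, -, -, h₁⟩, ⟨-, -, -, h₂, -, -, h₃⟩⟩ := h
  unfold star at h₃
  omega

section Fold

variable {S : Multiset (ℕ × ℕ)}

/-- Undoes `hash` on `𝔖 ∪ 𝔖^#`: elements of `ON(v)` have `r + c ≤ 2d`, their images under
`hash` have `r + c > 2d`. -/
def foldHash (d : ℕ) (g : ℕ × ℕ) : ℕ × ℕ :=
  if 2 * d < g.1 + g.2 then hash d g else g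

theorem exists_of_mem_add_map_hash {g : ℕ × ℕ} (hg : g ∈ S + S.map (hash d)) :
    ∃ b ∈ S, g = b ∨ g = hash d b := by
  rcases Multiset.mem_add.mp hg with h | h
  · exact ⟨g, h, .inl rfl⟩
  · obtain ⟨b, hb, rfl⟩ := Multiset.mem_map.mp h
    exact ⟨b, hb, .inr rfl⟩

theorem foldHash_eq_of_inON {b g : ℕ × ℕ} (hb : inON d v b) (hg : g = b ∨ g = hash d b) :
    foldHash d g = b := by
  have := hb.bounds
  unfold foldHash
  rcases hg with rfl | rfl
  · exact if_neg (by omega)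
  · rw [if_pos (by simp only [hash, star]; omega)]
    ext <;> simp only [hash, star] <;> omega

theorem foldHash_mem (hS : ∀ a ∈ S, inON d v a) {g : ℕ × ℕ} (hg : g ∈ S + S.map (hash d)) :
    foldHash d g ∈ S := by
  obtain ⟨b, hb, hgb⟩ := exists_of_mem_add_map_hash hg
  rwa [foldHash_eq_of_inON (hS b hb) hgb]

theorem pgt_foldHash (hS : ∀ a ∈ S, inON d v a) {g h : ℕ × ℕ}
    (hg : g ∈ S + S.map (hash d)) (hh : h ∈ S + S.map (hash d)) (hgh : pgt g h) :
    pgt (foldHash d g) (foldHash d h) := by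
  obtain ⟨b, hb, hgb⟩ := exists_of_mem_add_map_hash hg
  obtain ⟨c, hc, hhc⟩ := exists_of_mem_add_map_hash hh
  rw [foldHash_eq_of_inON (hS b hb) hgb, foldHash_eq_of_inON (hS c hc) hhc]
  have := (hS b hb).bounds
  have := (hS c hc).bounds
  rcases hgb with rfl | rfl <;> rcases hhc with rfl | rfl <;>
    simp only [pgt, hash, star] at hgh ⊢ <;> omega

theorem isChain_map_foldHash (hS : ∀ a ∈ S, inON d v a) {L : List (ℕ × ℕ)}
    (hL : IsChainIn (S + S.map (hash d)) L) : (L.map (foldHash d)).IsChain pgt :=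
  (List.isChain_map _).2 <|
    hL.1.imp_of_mem_imp fun _ _ hg hh => pgt_foldHash hS (hL.2 _ hg) (hL.2 _ hh)

end Fold

section Types

theorem Connected.star_lt {a b : ℕ × ℕ} (hab : Connected d a b) (h : pgt a b) :
    star d a.1 < a.1 :=
  hab.2.trans h.1

theorem components_append_cons_of_isolated {p q : List (ℕ × ℕ)} {γ : ℕ × ℕ}
    (hp : ∀ x ∈ p.getLast?, ¬ Connected d x γ) (hq : ∀ y ∈ q.head?, ¬ Connected d γ y) :
    components d (p ++ γ :: q) = components d p ++ [γ] :: components d q := by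
  unfold components
  rw [List.splitBy_append_cons _ (by simpa using hp), ← List.singleton_append,
    List.splitBy_append (by simpa using hq)]
  simp [List.splitBy_of_isChain]

theorem typeOf_eq_S_of_isolated {p q : List (ℕ × ℕ)} {γ : ℕ × ℕ} (hnd : (p ++ γ :: q).Nodup)
    (hp : ∀ x ∈ p.getLast?, ¬ Connected d x γ) (hq : ∀ y ∈ q.head?, ¬ Connected d γ y)
    (hγ : ¬ star d γ.1 < γ.1) : typeOf d (p ++ γ :: q) γ = .S := by
  have hγp : ∀ g ∈ components d p, γ ∉ g := fun g hg hγg =>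
    (List.nodup_append.mp hnd).2.2 γ
      (List.flatten_splitBy _ p ▸ List.mem_flatten.mpr ⟨g, hg, hγg⟩) γ (by simp) rfl
  unfold typeOf
  rw [components_append_cons_of_isolated hp hq, List.find?_append,
    List.find?_eq_none.mpr (by simpa using hγp)]
  simp [hγ]

theorem not_star_lt_of_typeOf_eq_S {C : List (ℕ × ℕ)} {α : ℕ × ℕ}
    (h : typeOf d C α = .S) : ¬ star d α.1 < α.1 := by
  unfold typeOf at h
  split at h
  · split at h
    · split at h
      · exact VType.noConfusion h
      · assumption
    · exact VType.noConfusion h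
  · exact VType.noConfusion h

theorem typeOf_eq_S_of_succ {l₁ l₂ : List (ℕ × ℕ)} {β γ : ℕ × ℕ}
    (hC : (l₁ ++ β :: γ :: l₂).IsChain pgt) (hβ : typeOf d (l₁ ++ β :: γ :: l₂) β = .S) :
    typeOf d (l₁ ++ β :: γ :: l₂) γ = .S := by
  have hβ' := not_star_lt_of_typeOf_eq_S hβ
  obtain ⟨-, hβγ, hγl₂⟩ := List.isChain_append_cons_cons.mp hC
  have hγ : ¬ star d γ.1 < γ.1 := by have := hβγ.1; unfold star at hβ' ⊢; omega
  have hsplit : l₁ ++ β :: γ :: l₂ = (l₁ ++ [β]) ++ γ :: l₂ := by simp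
  rw [hsplit] at hC ⊢
  refine typeOf_eq_S_of_isolated (nodup_of_isChain_pgt hC) ?_ ?_ hγ
  · simpa using fun hc => hβ' (hc.star_lt hβγ)
  · cases l₂ with
    | nil => simp
    | cons ε _ => simpa using fun hc => hγ (hc.star_lt (List.isChain_cons_cons.mp hγl₂).1)

end Types

section ODepth

variable {C : List (ℕ × ℕ)}

theorem qCa_of_typeOf_eq_S {α : ℕ × ℕ} (h : typeOf d C α = .S) : qCa d C α = α := by
  unfold qCa; rw [h]

theorem qCa_of_typeOf_ne_S {α : ℕ × ℕ} (h : typeOf d C α ≠ .S) : qCa d C α = pv d α := by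
  unfold qCa; split <;> simp_all

theorem qCa_mem_SC {α : ℕ × ℕ} (hα : α ∈ C) : qCa d C α ∈ SC d C := by
  have hq : qCa d C α ∈ SCa d C α := by unfold qCa SCa; cases typeOf d C α <;> simp
  exact Multiset.mem_of_le (List.le_sum_of_mem (List.mem_map_of_mem hα)) hq

theorem card_SC_le : Multiset.card (SC d C) ≤ 2 * C.length := by
  have hSCa : ∀ α, Multiset.card (SCa d C α) ≤ 2 := fun α => by
    unfold SCa; cases typeOf d C α <;> simp
  calc Multiset.card (SC d C) = (C.map fun α => Multiset.card (SCa d C α)).sum := by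
        rw [SC, ← Multiset.cardHom_apply, map_list_sum, List.map_map]; rfl
    _ ≤ (C.map fun α => Multiset.card (SCa d C α)).length • 2 :=
        List.sum_le_card_nsmul _ _ fun n hn => by
          obtain ⟨α, -, rfl⟩ := List.mem_map.mp hn
          exact hSCa α
    _ = 2 * C.length := by rw [List.length_map, smul_eq_mul, mul_comm]

theorem pgt_qCa (hC : IsVChain d v C) {l₁ l₂ : List (ℕ × ℕ)} {β γ : ℕ × ℕ}
    (hCβγ : C = l₁ ++ β :: γ :: l₂) : pgt (qCa d C β) (qCa d C γ) := by
  have hβγ : pgt β γ := (List.isChain_append_cons_cons.mp (hCβγ ▸ hC.1)).2.1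
  have := (hC.2 β (by simp [hCβγ])).bounds
  have := (hC.2 γ (by simp [hCβγ])).bounds
  by_cases hβ : typeOf d C β = .S
  · have hγ : typeOf d C γ = .S := by subst hCβγ; exact typeOf_eq_S_of_succ hC.1 hβ
    rwa [qCa_of_typeOf_eq_S hβ, qCa_of_typeOf_eq_S hγ]
  · rw [qCa_of_typeOf_ne_S hβ]
    by_cases hγ : typeOf d C γ = .S
    · rw [qCa_of_typeOf_eq_S hγ]
      simp only [pgt, pv, star] at hβγ ⊢; omega
    · rw [qCa_of_typeOf_ne_S hγ]
      simp only [pgt, pv, star] at hβγ ⊢; omega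

theorem length_le_odepthC (hC : IsVChain d v C) {α : ℕ × ℕ} (hα : C.getLast? = some α) :
    C.length ≤ odepthC d C α := by
  have hq : IsChainIn (SC d C) (C.map (qCa d C)) :=
    ⟨(List.isChain_map _).2 <| List.isChain_iff_forall_rel_of_append_cons_cons.2
        fun _ _ _ _ h => pgt_qCa hC h,
      fun _ hq => by
        obtain ⟨β, hβ, rfl⟩ := List.mem_map.mp hq
        exact qCa_mem_SC hβ⟩
  unfold odepthC
  simpa using hq.length_le_depth (by simp [hα])

theorem odepthC_le_odepthM {S : Multiset (ℕ × ℕ)} (hC : IsVChain d v C) (hCS : ∀ β ∈ C, β ∈ S)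
    {α : ℕ × ℕ} (hα : α ∈ C) : odepthC d C α ≤ odepthM d v S α := by
  refine le_csSup ⟨2 * Multiset.card S, ?_⟩ ⟨C, hC, hCS, hα, rfl⟩
  rintro _ ⟨C', hC', hC'S, -, rfl⟩
  calc odepthC d C' α ≤ Multiset.card (SC d C') := depth_le_card _ _
    _ ≤ 2 * C'.length := card_SC_le
    _ ≤ 2 * Multiset.card S := by
      have : C'.length ≤ Multiset.card S := IsChainIn.length_le_card ⟨hC'.1, hC'S⟩
      omega

end ODepth

end OG

open OG in
theorem stmt10_general (d : ℕ) (v : Finset ℕ)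
    (S : Multiset (ℕ × ℕ)) (hS : ∀ α ∈ S, inON d v α) (α : ℕ × ℕ) (hα : α ∈ S) :
    depth (S + S.map (hash d)) α ≤ odepthM d v S α := by
  refine csSup_le' ?_
  rintro _ ⟨L, hL, hLα, rfl⟩
  set C := L.map (foldHash d)
  have hCS : ∀ β ∈ C, β ∈ S := by
    simp only [C, List.mem_map]
    rintro _ ⟨g, hg, rfl⟩
    exact foldHash_mem hS (hL.2 g hg)
  have hC : IsVChain d v C := ⟨isChain_map_foldHash hS hL, fun β hβ => hS β (hCS β hβ)⟩
  have hCα : C.getLast? = some α := by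
    simp [C, hLα, foldHash_eq_of_inON (hS α hα) (.inl rfl)]
  calc L.length = C.length := (L.length_map _).symm
    _ ≤ odepthC d C α := length_le_odepthC hC hCα
    _ ≤ odepthM d v S α := odepthC_le_odepthM hC hCS (List.mem_of_getLast? hCα)

open OG in
/-- the o-depth of `α` in a monomial `𝔖` of `ON(v)` is at least the depth
of `α` in the monomial `𝔖 ∪ 𝔖^#` of `N(v)`. -/
theorem stmt10 (d : ℕ) (hd : 0 < d) (v : Finset ℕ) (hv : v ∈ Iset d)
    (S : Multiset (ℕ × ℕ)) (hS : ∀ α ∈ S, inON d v α) (α : ℕ × ℕ) (hα : α ∈ S) :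
    depth (S + S.map (hash d)) α ≤ odepthM d v S α :=
  stmt10_general d v S hS α hα
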